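/- Let N ∈ k^σ[X^r] be a monic irreducible polynomial different from X^r, and let E = k^σ[X^r]/(N). Then the centre of the quotient ring k[X,σ]/(N) is exactly E, i.e., the image of k^σ[X^r] in the quotient. -/

import Mathlib

/-- A ring `R` together with a ring embedding `ι : k →+* R` and an element `X : R` is
*the* skew polynomial ring `k[X,σ]` if `X * ι a = ι (σ a) * X` for all `a : k` and every
element of `R` can be written uniquely as a finite sum `∑ ι aᵢ * X ^ i`. -/
structure IsSkewPolyRing (k : Type*) [Field k] (σ : k ≃+* k)
    (R : Type*) [Ring R] (ι : k →+* R) (X : R) : Prop where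
  X_mul : ∀ a : k, X * ι a = ι (σ a) * X
  repr_unique : ∀ y : R, ∃! c : ℕ →₀ k, y = c.sum fun i a => ι a * X ^ i

namespace IsSkewPolyRing

variable {k : Type*} [Field k] {σ : k ≃+* k} {R : Type*} [Ring R] {ι : k →+* R} {X : R}

/-- The coefficients of a skew polynomial. -/
noncomputable def repr (h : IsSkewPolyRing k σ R ι X) (y : R) : ℕ →₀ k :=
  (h.repr_unique y).exists.choose

/-- `y` has degree at most `n`. -/
def degLE (h : IsSkewPolyRing k σ R ι X) (y : R) (n : ℕ) : Prop :=
  ∀ i, n < i → h.repr y i = 0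

/-- `y` is monic of degree `d`. -/
def MonicOfDegree (h : IsSkewPolyRing k σ R ι X) (y : R) (d : ℕ) : Prop :=
  h.repr y d = 1 ∧ h.degLE y d

/-- `y` is monic. -/
def Monic (h : IsSkewPolyRing k σ R ι X) (y : R) : Prop := ∃ d, h.MonicOfDegree y d

/-- The matrix of right multiplication by `P` on `k[X,σ]`, viewed as a free module of
rank `r` over `k[X^r]` (identified with `Polynomial k` via `X^r ↦ Y`), in the basis
`1, X, …, X^(r-1)`. -/
noncomputable def normMatrix (h : IsSkewPolyRing k σ R ι X) (r : ℕ) (P : R) :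
    Matrix (Fin r) (Fin r) (Polynomial k) :=
  fun l j => ∑ i ∈ (h.repr P).support,
    if (i + (j : ℕ)) % r = (l : ℕ) then
      Polynomial.monomial ((i + (j : ℕ)) / r) ((σ ^ (j : ℕ)) (h.repr P i))
    else 0

/-- The reduced norm of a skew polynomial `P`: the determinant of right multiplication
by `P` on `k[X,σ]` viewed as a free `k[X^r]`-module of rank `r`, written as a
(commutative) polynomial in the variable `X^r`. -/
noncomputable def norm (h : IsSkewPolyRing k σ R ι X) (r : ℕ) (P : R) : Polynomial k :=
  (h.normMatrix r P).det

end IsSkewPolyRing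

/-- The fixed subfield `k^σ` of an automorphism `σ` of `k`. -/
def fixedSubfield {k : Type*} [Field k] (σ : k ≃+* k) : Subfield k where
  carrier := {a | σ a = a}
  mul_mem' := by intro a b ha hb; simp_all [Set.mem_setOf_eq]
  one_mem' := map_one σ
  add_mem' := by intro a b ha hb; simp_all [Set.mem_setOf_eq]
  zero_mem' := map_zero σ
  neg_mem' := by intro a ha; simp_all [Set.mem_setOf_eq]
  inv_mem' := by intro a ha; simp_all [Set.mem_setOf_eq]

/-- The element of `k[X,σ]` corresponding to a commutative polynomial with
coefficients in the fixed field `k^σ`, via the substitution `Y ↦ X^r`; these are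
exactly the elements of `k^σ[X^r]`. -/
noncomputable def centralElt {k : Type*} [Field k] (σ : k ≃+* k)
    {R : Type*} [Ring R] (ι : k →+* R) (X : R) (r : ℕ)
    (f : Polynomial (fixedSubfield σ)) : R :=
  Polynomial.eval₂ (ι.comp (fixedSubfield σ).subtype) (X ^ r) f

/-! Every element of `k[X,σ]` is uniquely `∑ ι cⱼ Xʲ`, and coefficients of products obey the skew
Cauchy formula `(yz)ₙ = ∑_{i+j=n} yᵢ σⁱ(zⱼ)`. Since `σʳ = 1`, the elements of `k^σ[X^r]` are
central. As `N` is central and monic of degree `n = r · deg f`, every class modulo `(N)` has a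
representative `P` of degree `< n`, while nonzero multiples of `N` have degree `≥ n`. If the class
of `P` is central, each commutator `ι a P - P ι a` lies in `(N)` and has degree `< n`, so it
vanishes: `cⱼ ≠ 0` forces `σʲ = 1`, i.e. `r ∣ j`. Then `X P - P X` has degree `< n` as well, since
`cₙ₋₁ ≠ 0` would give `r ∣ n - 1` and `r ∣ n`, hence `σ = 1`; so it vanishes too, every `cⱼ` is
`σ`-fixed, and `P ∈ k^σ[X^r]`. -/

open Finset.HasAntidiagonal

namespace TwoSidedIdeal

variable {R : Type*} [Ring R]

theorem mk'_eq_mk'_iff (I : TwoSidedIdeal R) {a b : R} :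
    I.ringCon.mk' a = I.ringCon.mk' b ↔ a - b ∈ I :=
  (RingCon.eq _).trans (I.rel_iff a b)

theorem mk'_mem_center_iff (I : TwoSidedIdeal R) (z : R) :
    I.ringCon.mk' z ∈ Subring.center I.ringCon.Quotient ↔ ∀ w, w * z - z * w ∈ I := by
  simp only [Subring.mem_center_iff, I.ringCon.mk'_surjective.forall, ← map_mul, mk'_eq_mk'_iff]

theorem exists_eq_mul_of_mem_span_singleton {N w : R} (hN : N ∈ Subring.center R)
    (hw : w ∈ span {N}) : ∃ q, w = q * N := by
  induction hw using span_induction with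
  | mem x hx => exact ⟨1, by rw [Set.mem_singleton_iff.1 hx, one_mul]⟩
  | zero => exact ⟨0, (zero_mul N).symm⟩
  | add x y _ _ hx hy =>
    obtain ⟨a, rfl⟩ := hx
    obtain ⟨b, rfl⟩ := hy
    exact ⟨a + b, (add_mul a b N).symm⟩
  | neg x _ hx =>
    obtain ⟨a, rfl⟩ := hx
    exact ⟨-a, (neg_mul a N).symm⟩
  | left_absorb a x _ hx =>
    obtain ⟨q, rfl⟩ := hx
    exact ⟨a * q, (mul_assoc a q N).symm⟩
  | right_absorb b x _ hx =>
    obtain ⟨q, rfl⟩ := hx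
    exact ⟨q * b, by rw [mul_assoc, mul_assoc, Subring.mem_center_iff.1 hN b]⟩

end TwoSidedIdeal

namespace IsSkewPolyRing

variable {k : Type*} [Field k] {σ : k ≃+* k} {R : Type*} [Ring R] {ι : k →+* R} {X : R}

noncomputable def ofCoeffs (ι : k →+* R) (X : R) : (ℕ →₀ k) →+ R :=
  Finsupp.liftAddHom fun i => (AddMonoidHom.mulRight (X ^ i)).comp ι.toAddMonoidHom

theorem ofCoeffs_apply (c : ℕ →₀ k) : ofCoeffs ι X c = c.sum fun i a => ι a * X ^ i :=
  Finsupp.liftAddHom_apply _ _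

theorem ofCoeffs_single (i : ℕ) (a : k) : ofCoeffs ι X (Finsupp.single i a) = ι a * X ^ i := by
  simp [ofCoeffs]

theorem ofCoeffs_repr (h : IsSkewPolyRing k σ R ι X) (y : R) : ofCoeffs ι X (h.repr y) = y :=
  (ofCoeffs_apply _).trans (h.repr_unique y).exists.choose_spec.symm

theorem repr_ofCoeffs (h : IsSkewPolyRing k σ R ι X) (c : ℕ →₀ k) :
    h.repr (ofCoeffs ι X c) = c :=
  (h.repr_unique _).unique (h.ofCoeffs_repr _ |>.symm.trans (ofCoeffs_apply _))
    (ofCoeffs_apply _)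

noncomputable def reprAddEquiv (h : IsSkewPolyRing k σ R ι X) : R ≃+ (ℕ →₀ k) where
  toFun := h.repr
  invFun := ofCoeffs ι X
  left_inv := h.ofCoeffs_repr
  right_inv := h.repr_ofCoeffs
  map_add' y z := by
    conv_rhs => rw [← h.repr_ofCoeffs (h.repr y + h.repr z), map_add, h.ofCoeffs_repr,
      h.ofCoeffs_repr]

theorem repr_sub (h : IsSkewPolyRing k σ R ι X) (y z : R) :
    h.repr (y - z) = h.repr y - h.repr z :=
  map_sub h.reprAddEquiv y z

@[simp]
theorem repr_zero (h : IsSkewPolyRing k σ R ι X) : h.repr 0 = 0 :=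
  map_zero h.reprAddEquiv

@[simp]
theorem repr_add (h : IsSkewPolyRing k σ R ι X) (y z : R) :
    h.repr (y + z) = h.repr y + h.repr z :=
  map_add h.reprAddEquiv y z

theorem repr_eq_zero_iff (h : IsSkewPolyRing k σ R ι X) {y : R} : h.repr y = 0 ↔ y = 0 :=
  h.reprAddEquiv.map_eq_zero_iff

theorem repr_monomial (h : IsSkewPolyRing k σ R ι X) (a : k) (i : ℕ) :
    h.repr (ι a * X ^ i) = Finsupp.single i a := by
  rw [← ofCoeffs_single, h.repr_ofCoeffs]

theorem X_pow_mul (h : IsSkewPolyRing k σ R ι X) (i : ℕ) (a : k) :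
    X ^ i * ι a = ι ((σ ^ i) a) * X ^ i := by
  induction i with
  | zero => simp
  | succ i ih =>
    rw [pow_succ', mul_assoc, ih, ← mul_assoc, h.X_mul, mul_assoc, pow_succ' σ]
    rfl

theorem repr_mul (h : IsSkewPolyRing k σ R ι X) (y z : R) (n : ℕ) :
    h.repr (y * z) n =
      ∑ x ∈ antidiagonal n, h.repr y x.1 * (σ ^ x.1) (h.repr z x.2) := by
  rw [← h.ofCoeffs_repr y, ← h.ofCoeffs_repr z, h.repr_ofCoeffs, h.repr_ofCoeffs]
  induction h.repr y using Finsupp.induction_linear with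
  | zero => simp
  | add c d hc hd => simp [add_mul, hc, hd, Finset.sum_add_distrib]
  | single i a =>
    induction h.repr z using Finsupp.induction_linear with
    | zero => simp
    | add c d hc hd => simp [mul_add, hc, hd, Finset.sum_add_distrib]
    | single l b =>
      rw [ofCoeffs_single, ofCoeffs_single, mul_assoc, ← mul_assoc (X ^ i), h.X_pow_mul,
        mul_assoc, ← pow_add, ← mul_assoc, ← map_mul, h.repr_monomial]
      have hterm : ∀ x : ℕ × ℕ, Finsupp.single i a x.1 * (σ ^ x.1) (Finsupp.single l b x.2) =
          if (i, l) = x then a * (σ ^ i) b else 0 := by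
        rintro ⟨p, q⟩
        simp only [Finsupp.single_apply, Prod.mk.injEq]
        split_ifs <;> simp_all
      simp only [hterm, Finset.sum_ite_eq, mem_antidiagonal]
      exact Finsupp.single_apply

theorem degLE_mul (h : IsSkewPolyRing k σ R ι X) {y z : R} {m l : ℕ} (hy : h.degLE y m)
    (hz : h.degLE z l) : h.degLE (y * z) (m + l) := by
  intro n hn
  rw [h.repr_mul]
  refine Finset.sum_eq_zero fun ⟨p, q⟩ hpq => ?_
  rw [mem_antidiagonal] at hpq
  rcases lt_or_ge m p with hp | hp
  · rw [hy p hp, zero_mul]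
  · rw [hz q (by omega), map_zero, mul_zero]

theorem repr_mul_of_degLE (h : IsSkewPolyRing k σ R ι X) {y z : R} {m l : ℕ} (hy : h.degLE y m)
    (hz : h.degLE z l) : h.repr (y * z) (m + l) = h.repr y m * (σ ^ m) (h.repr z l) := by
  rw [h.repr_mul, Finset.sum_eq_single_of_mem (m, l) (mem_antidiagonal.2 rfl)]
  rintro ⟨p, q⟩ hpq hne
  rw [mem_antidiagonal] at hpq
  rcases lt_or_ge m p with hp | hp
  · rw [hy p hp, zero_mul]
  · have hq : l < q := by
      by_contra
      exact hne (Prod.ext (by simp only; omega) (by simp only; omega))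
    rw [hz q hq, map_zero, mul_zero]

theorem repr_monomial_mul (h : IsSkewPolyRing k σ R ι X) (a : k) (i : ℕ) (y : R) (n : ℕ) :
    h.repr (ι a * X ^ i * y) (n + i) = a * (σ ^ i) (h.repr y n) := by
  rw [h.repr_mul, Finset.sum_eq_single_of_mem (i, n) (mem_antidiagonal.2 (add_comm i n)),
    h.repr_monomial, Finsupp.single_eq_same]
  rintro ⟨p, q⟩ hpq hne
  rw [mem_antidiagonal] at hpq
  have hp : p ≠ i := fun hp => hne (Prod.ext hp (by simp only at hp ⊢; omega))
  rw [h.repr_monomial, Finsupp.single_eq_of_ne hp, zero_mul]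

theorem repr_mul_monomial (h : IsSkewPolyRing k σ R ι X) (y : R) (a : k) (i n : ℕ) :
    h.repr (y * (ι a * X ^ i)) (n + i) = h.repr y n * (σ ^ n) a := by
  rw [h.repr_mul, Finset.sum_eq_single_of_mem (n, i) (mem_antidiagonal.2 rfl),
    h.repr_monomial, Finsupp.single_eq_same]
  rintro ⟨p, q⟩ hpq hne
  rw [mem_antidiagonal] at hpq
  have hq : q ≠ i := fun hq => hne (Prod.ext (by simp only at hq ⊢; omega) hq)
  rw [h.repr_monomial, Finsupp.single_eq_of_ne hq, map_zero, mul_zero]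

theorem repr_ι_mul (h : IsSkewPolyRing k σ R ι X) (a : k) (y : R) (n : ℕ) :
    h.repr (ι a * y) n = a * h.repr y n := by
  simpa using h.repr_monomial_mul a 0 y n

theorem repr_mul_ι (h : IsSkewPolyRing k σ R ι X) (y : R) (a : k) (n : ℕ) :
    h.repr (y * ι a) n = h.repr y n * (σ ^ n) a := by
  simpa using h.repr_mul_monomial y a 0 n

theorem repr_X_mul_succ (h : IsSkewPolyRing k σ R ι X) (y : R) (n : ℕ) :
    h.repr (X * y) (n + 1) = σ (h.repr y n) := by
  simpa using h.repr_monomial_mul 1 1 y n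

theorem repr_mul_X_succ (h : IsSkewPolyRing k σ R ι X) (y : R) (n : ℕ) :
    h.repr (y * X) (n + 1) = h.repr y n := by
  simpa using h.repr_mul_monomial y 1 1 n

theorem repr_X (h : IsSkewPolyRing k σ R ι X) : h.repr X = Finsupp.single 1 1 := by
  simpa using h.repr_monomial 1 1

theorem repr_X_mul_zero (h : IsSkewPolyRing k σ R ι X) (y : R) : h.repr (X * y) 0 = 0 := by
  simp [h.repr_mul, h.repr_X]

theorem repr_mul_X_zero (h : IsSkewPolyRing k σ R ι X) (y : R) : h.repr (y * X) 0 = 0 := by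
  simp [h.repr_mul, h.repr_X]

theorem repr_centralElt (h : IsSkewPolyRing k σ R ι X) {r : ℕ} (hr0 : 0 < r)
    (g : Polynomial (fixedSubfield σ)) (n : ℕ) :
    h.repr (centralElt σ ι X r g) n = if r ∣ n then (g.coeff (n / r) : k) else 0 := by
  induction g using Polynomial.induction_on' with
  | add p q hp hq =>
    rw [centralElt, Polynomial.eval₂_add, h.repr_add, Finsupp.add_apply]
    rw [centralElt] at hp hq
    split_ifs at hp hq ⊢ <;> simp [hp, hq]
  | monomial e a =>
    rw [centralElt, Polynomial.eval₂_monomial, ← pow_mul, RingHom.comp_apply, h.repr_monomial,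
      Finsupp.single_apply, Polynomial.coeff_monomial]
    by_cases hn : r ∣ n
    · obtain ⟨i, rfl⟩ := hn
      simp [Nat.mul_div_cancel_left i hr0, hr0.ne', apply_ite Subtype.val]
    · rw [if_neg hn, if_neg]
      rintro rfl
      exact hn (dvd_mul_right r e)

theorem repr_centralElt_mul (h : IsSkewPolyRing k σ R ι X) {r : ℕ} (hr0 : 0 < r)
    (g : Polynomial (fixedSubfield σ)) (i : ℕ) :
    h.repr (centralElt σ ι X r g) (r * i) = g.coeff i := by
  rw [h.repr_centralElt hr0, if_pos (dvd_mul_right r i), Nat.mul_div_cancel_left i hr0]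

theorem degLE_centralElt (h : IsSkewPolyRing k σ R ι X) {r : ℕ} (hr0 : 0 < r)
    (g : Polynomial (fixedSubfield σ)) : h.degLE (centralElt σ ι X r g) (r * g.natDegree) := by
  intro n hn
  rw [h.repr_centralElt hr0]
  split_ifs with hdvd
  · obtain ⟨i, rfl⟩ := hdvd
    rw [Nat.mul_div_cancel_left i hr0,
      Polynomial.coeff_eq_zero_of_natDegree_lt (lt_of_mul_lt_mul_left hn hr0.le)]
    rfl
  · rfl

theorem exists_centralElt_eq (h : IsSkewPolyRing k σ R ι X) {r : ℕ} {y : R}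
    (hfix : ∀ n, σ (h.repr y n) = h.repr y n) (hdvd : ∀ n, h.repr y n ≠ 0 → r ∣ n) :
    ∃ g, centralElt σ ι X r g = y := by
  refine ⟨∑ n ∈ (h.repr y).support, Polynomial.monomial (n / r) ⟨h.repr y n, hfix n⟩, ?_⟩
  conv_rhs => rw [← h.ofCoeffs_repr y, ofCoeffs_apply, Finsupp.sum]
  rw [centralElt, Polynomial.eval₂_finsetSum]
  refine Finset.sum_congr rfl fun n hn => ?_
  rw [Polynomial.eval₂_monomial, ← pow_mul,
    Nat.mul_div_cancel' (hdvd n (Finsupp.mem_support_iff.1 hn))]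
  rfl

theorem mem_center_of_commute (h : IsSkewPolyRing k σ R ι X) {z : R}
    (hι : ∀ a, Commute (ι a) z) (hX : Commute X z) : z ∈ Subring.center R := by
  rw [Subring.mem_center_iff]
  intro w
  rw [← h.ofCoeffs_repr w, ofCoeffs_apply, Finsupp.sum_mul, Finsupp.mul_sum]
  exact Finset.sum_congr rfl fun i _ => ((hι _).mul_left (hX.pow_left i)).eq

theorem centralElt_mem_center (h : IsSkewPolyRing k σ R ι X) {r : ℕ} (hr : orderOf σ = r)
    (g : Polynomial (fixedSubfield σ)) : centralElt σ ι X r g ∈ Subring.center R := by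
  have hι : ∀ b : fixedSubfield σ, ι b ∈ Subring.center R := fun b =>
    h.mem_center_of_commute (fun a => (Commute.all a b).map ι)
      (by rw [Commute, SemiconjBy, h.X_mul, b.2])
  have hXr : X ^ r ∈ Subring.center R := by
    refine h.mem_center_of_commute (fun a => ?_) (Commute.self_pow X r)
    rw [Commute, SemiconjBy, h.X_pow_mul, ← hr, pow_orderOf_eq_one]
    rfl
  rw [centralElt, Polynomial.eval₂_eq_sum, Polynomial.sum_def]
  exact Subring.sum_mem _ fun i _ => Subring.mul_mem _ (hι _) (Subring.pow_mem _ hXr i)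

/-- Unlike `degLE y (n - 1)`, this also makes sense for `n = 0`, where it says `y = 0`. -/
def degLT (h : IsSkewPolyRing k σ R ι X) (y : R) (n : ℕ) : Prop :=
  ∀ i, n ≤ i → h.repr y i = 0

theorem exists_degLT (h : IsSkewPolyRing k σ R ι X) (y : R) : ∃ n, h.degLT y n :=
  ⟨(h.repr y).support.sup id + 1, fun _ hi => Finsupp.notMem_support_iff.1 fun hmem =>
    (Finset.le_sup (f := id) hmem).not_gt hi⟩

theorem degLE_monomial (h : IsSkewPolyRing k σ R ι X) (a : k) (i : ℕ) :
    h.degLE (ι a * X ^ i) i := fun _ hj => by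
  rw [h.repr_monomial, Finsupp.single_eq_of_ne hj.ne']

theorem eq_zero_of_mem_span_of_degLT (h : IsSkewPolyRing k σ R ι X) {r : ℕ}
    (hr : orderOf σ = r) (hr0 : 0 < r) {f : Polynomial (fixedSubfield σ)} (hmon : f.Monic)
    {w : R} (hw : w ∈ TwoSidedIdeal.span {centralElt σ ι X r f})
    (hlt : h.degLT w (r * f.natDegree)) : w = 0 := by
  obtain ⟨q, rfl⟩ := TwoSidedIdeal.exists_eq_mul_of_mem_span_singleton
    (h.centralElt_mem_center hr f) hw
  by_contra hne
  have hq : (h.repr q).support.Nonempty := Finsupp.support_nonempty_iff.2 fun hq =>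
    hne (by rw [h.repr_eq_zero_iff.1 hq, zero_mul])
  set m := (h.repr q).support.max' hq
  have hqm : h.degLE q m := fun i hi =>
    Finsupp.notMem_support_iff.1 fun hmem => hi.not_ge (Finset.le_max' _ i hmem)
  have htop := hlt (m + r * f.natDegree) (Nat.le_add_left _ _)
  rw [h.repr_mul_of_degLE hqm (h.degLE_centralElt hr0 f), h.repr_centralElt_mul hr0,
    hmon.coeff_natDegree, OneMemClass.coe_one, map_one, mul_one] at htop
  exact Finsupp.mem_support_iff.1 (Finset.max'_mem _ hq) htop

theorem degLT_sub_leadingTerm (h : IsSkewPolyRing k σ R ι X) {y N : R} {m n : ℕ}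
    (hy : h.degLT y (m + 1)) (hN : h.degLE N n) (hN1 : h.repr N n = 1) (hnm : n ≤ m) :
    h.degLT (y - ι (h.repr y m) * X ^ (m - n) * N) m := by
  have hT := h.degLE_mul (h.degLE_monomial (h.repr y m) (m - n)) hN
  rw [Nat.sub_add_cancel hnm] at hT
  intro i hi
  rw [h.repr_sub, Finsupp.sub_apply]
  rcases hi.eq_or_lt with rfl | hi
  · have hlead := h.repr_monomial_mul (h.repr y m) (m - n) N n
    rw [Nat.add_sub_cancel' hnm, hN1, map_one, mul_one] at hlead
    rw [hlead, sub_self]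
  · rw [hy i hi, hT i hi, sub_zero]

theorem exists_sub_mem_span_degLT (h : IsSkewPolyRing k σ R ι X) {r : ℕ} (hr0 : 0 < r)
    {f : Polynomial (fixedSubfield σ)} (hmon : f.Monic) (y : R) :
    ∃ ρ, y - ρ ∈ TwoSidedIdeal.span {centralElt σ ι X r f} ∧ h.degLT ρ (r * f.natDegree) := by
  set N := centralElt σ ι X r f
  have hN1 : h.repr N (r * f.natDegree) = 1 := by
    rw [h.repr_centralElt_mul hr0, hmon.coeff_natDegree, OneMemClass.coe_one]
  obtain ⟨m, hm⟩ := h.exists_degLT y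
  induction m generalizing y with
  | zero => exact ⟨y, by rw [sub_self]; exact zero_mem _, fun i _ => hm i (Nat.zero_le i)⟩
  | succ m ih =>
    by_cases hmn : m + 1 ≤ r * f.natDegree
    · exact ⟨y, by rw [sub_self]; exact zero_mem _, fun i hi => hm i (hmn.trans hi)⟩
    set T := ι (h.repr y m) * X ^ (m - r * f.natDegree) * N
    obtain ⟨ρ, hρ, hρn⟩ :=
      ih (y - T) (h.degLT_sub_leadingTerm hm (h.degLE_centralElt hr0 f) hN1 (by omega))
    have hT : T ∈ TwoSidedIdeal.span {N} :=
      TwoSidedIdeal.mul_mem_left _ _ _ (TwoSidedIdeal.subset_span rfl)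
    refine ⟨ρ, ?_, hρn⟩
    rw [show y - ρ = T + (y - T - ρ) by abel]
    exact TwoSidedIdeal.add_mem _ hT hρ

theorem degLT_commutator_ι (h : IsSkewPolyRing k σ R ι X) {P : R} {n : ℕ} (hP : h.degLT P n)
    (a : k) : h.degLT (ι a * P - P * ι a) n := fun i hi => by
  rw [h.repr_sub, Finsupp.sub_apply, h.repr_ι_mul, h.repr_mul_ι, hP i hi, mul_zero, zero_mul,
    sub_zero]

theorem dvd_of_commute_ι (h : IsSkewPolyRing k σ R ι X) {r : ℕ} (hr : orderOf σ = r) {P : R}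
    (hP : ∀ a, Commute (ι a) P) {j : ℕ} (hj : h.repr P j ≠ 0) : r ∣ j := by
  refine hr ▸ orderOf_dvd_of_pow_eq_one (RingEquiv.ext fun a => mul_left_cancel₀ hj ?_)
  rw [← h.repr_mul_ι, ← (hP a).eq, h.repr_ι_mul, mul_comm]
  rfl

theorem repr_fixed_of_commute_X (h : IsSkewPolyRing k σ R ι X) {P : R} (hP : Commute X P)
    (j : ℕ) : σ (h.repr P j) = h.repr P j := by
  rw [← h.repr_X_mul_succ, hP.eq, h.repr_mul_X_succ]

theorem degLT_commutator_X (h : IsSkewPolyRing k σ R ι X) {r : ℕ} (hr : orderOf σ = r)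
    {P : R} {n : ℕ} (hn : r ∣ n) (hP : h.degLT P n) (hι : ∀ a, Commute (ι a) P) :
    h.degLT (X * P - P * X) n := by
  intro i hi
  rw [h.repr_sub, Finsupp.sub_apply]
  cases i with
  | zero => rw [h.repr_X_mul_zero, h.repr_mul_X_zero, sub_self]
  | succ j =>
    rw [h.repr_X_mul_succ, h.repr_mul_X_succ, sub_eq_zero]
    by_cases hj : h.repr P j = 0
    · rw [hj, map_zero]
    have hjn : j + 1 = n := by
      by_contra
      exact hj (hP j (by omega))
    have hr1 : r = 1 :=
      Nat.dvd_one.1 ((Nat.dvd_add_right (h.dvd_of_commute_ι hr hι hj)).1 (hjn ▸ hn))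
    exact DFunLike.congr_fun (orderOf_eq_one_iff.1 (hr.trans hr1)) _

theorem exists_centralElt_eq_of_commute_mod (h : IsSkewPolyRing k σ R ι X) {r : ℕ}
    (hr : orderOf σ = r) (hr0 : 0 < r) {f : Polynomial (fixedSubfield σ)} (hmon : f.Monic)
    {P : R} (hP : h.degLT P (r * f.natDegree))
    (hcomm : ∀ w, w * P - P * w ∈ TwoSidedIdeal.span {centralElt σ ι X r f}) :
    ∃ g, centralElt σ ι X r g = P := by
  have commute_of_degLT : ∀ w, h.degLT (w * P - P * w) (r * f.natDegree) → Commute w P := fun w hw =>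
    sub_eq_zero.1 (h.eq_zero_of_mem_span_of_degLT hr hr0 hmon (hcomm w) hw)
  have hι : ∀ a, Commute (ι a) P := fun a => commute_of_degLT _ (h.degLT_commutator_ι hP a)
  have hX : Commute X P := commute_of_degLT _ (h.degLT_commutator_X hr (dvd_mul_right r _) hP hι)
  exact h.exists_centralElt_eq (h.repr_fixed_of_commute_X hX) fun j => h.dvd_of_commute_ι hr hι

end IsSkewPolyRing

theorem center_skewPolyRing_quotient_eq_general
    {k R : Type*} [Field k] [Fintype k] [Ring R]
    (σ : k ≃+* k) (r : ℕ) (hr : orderOf σ = r) (ι : k →+* R) (X : R)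
    (h : IsSkewPolyRing k σ R ι X) (f : Polynomial (fixedSubfield σ))
    (hmon : f.Monic)
    (y : (TwoSidedIdeal.span {centralElt σ ι X r f}).ringCon.Quotient) :
    y ∈ Subring.center ((TwoSidedIdeal.span {centralElt σ ι X r f}).ringCon.Quotient) ↔
      ∃ g : Polynomial (fixedSubfield σ),
        y = (TwoSidedIdeal.span {centralElt σ ι X r f}).ringCon.mk' (centralElt σ ι X r g) := by
  have : Finite (k ≃+* k) := Finite.of_injective _ DFunLike.coe_injective
  have hr0 : 0 < r := hr ▸ orderOf_pos σ
  obtain ⟨P₀, rfl⟩ := RingCon.mk'_surjective _ y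
  set I := TwoSidedIdeal.span {centralElt σ ι X r f}
  constructor
  · intro hy
    obtain ⟨P, hP₀, hP⟩ := h.exists_sub_mem_span_degLT hr0 hmon P₀
    rw [(I.mk'_eq_mk'_iff).2 hP₀] at hy ⊢
    rw [I.mk'_mem_center_iff] at hy
    obtain ⟨g, rfl⟩ := h.exists_centralElt_eq_of_commute_mod hr hr0 hmon hP hy
    exact ⟨g, rfl⟩
  · rintro ⟨g, hg⟩
    rw [hg, I.mk'_mem_center_iff]
    intro w
    rw [Subring.mem_center_iff.1 (h.centralElt_mem_center hr g) w, sub_self]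
    exact zero_mem I

/-- If `N ∈ k^σ[X^r]` is monic irreducible and different from `X^r`, then the centre of
the quotient ring `k[X,σ]/(N)` is exactly `E = k^σ[X^r]/(N)`, i.e. the image of
`k^σ[X^r]` in the quotient. -/
theorem center_skewPolyRing_quotient_eq
    {k R : Type*} [Field k] [Fintype k] [Ring R]
    (σ : k ≃+* k) (r : ℕ) (hr : orderOf σ = r) (ι : k →+* R) (X : R)
    (h : IsSkewPolyRing k σ R ι X) (f : Polynomial (fixedSubfield σ))
    (hmon : f.Monic) (hirr : Irreducible f) (hne : f ≠ Polynomial.X)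
    (y : (TwoSidedIdeal.span {centralElt σ ι X r f}).ringCon.Quotient) :
    y ∈ Subring.center ((TwoSidedIdeal.span {centralElt σ ι X r f}).ringCon.Quotient) ↔
      ∃ g : Polynomial (fixedSubfield σ),
        y = (TwoSidedIdeal.span {centralElt σ ι X r f}).ringCon.mk' (centralElt σ ι X r g) :=
  center_skewPolyRing_quotient_eq_general σ r hr ι X h f hmon y
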